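/- If a Banach lattice E has order continuous norm, then the solid hull of every almost limited set in E is almost limited. -/

import Mathlib

open Filter Topology

section Defs

variable {E : Type*} [NormedAddCommGroup E] [Lattice E] [HasSolidNorm E] [IsOrderedAddMonoid E] [NormedSpace ℝ E]

/-- The value of the modulus `|f|` of a functional at a positive element `x`:
`|f|(x) = sup { f y : |y| ≤ x }`. -/
noncomputable def absVal (f : E →L[ℝ] ℝ) (x : E) : ℝ :=
  sSup ((fun y => f y) '' {y | |y| ≤ x})

/-- The value of the positive part `f⁺` of a functional at a positive element `x`:
`f⁺(x) = sup { f y : 0 ≤ y ≤ x }`. -/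
noncomputable def posVal (f : E →L[ℝ] ℝ) (x : E) : ℝ :=
  sSup ((fun y => f y) '' {y | 0 ≤ y ∧ y ≤ x})

/-- The value of `|f|` at an arbitrary `x`, via `x = x⁺ - x⁻`. -/
noncomputable def absValF (f : E →L[ℝ] ℝ) (x : E) : ℝ :=
  absVal f (x ⊔ 0) - absVal f (-x ⊔ 0)

/-- The value of `f⁺` at an arbitrary `x`, via `x = x⁺ - x⁻`. -/
noncomputable def posValF (f : E →L[ℝ] ℝ) (x : E) : ℝ :=
  posVal f (x ⊔ 0) - posVal f (-x ⊔ 0)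

/-- The value of `f⁻ = (-f)⁺` at an arbitrary `x`. -/
noncomputable def negValF (f : E →L[ℝ] ℝ) (x : E) : ℝ :=
  posValF (-f) x

/-- `f ≤ g` in the dual order: `f x ≤ g x` for all `x ≥ 0`. -/
def FunLe (f g : E →L[ℝ] ℝ) : Prop := ∀ x : E, 0 ≤ x → f x ≤ g x

/-- `|f| ≤ |g|` in the dual order. -/
def FunAbsLe (f g : E →L[ℝ] ℝ) : Prop := ∀ x : E, 0 ≤ x → absVal f x ≤ absVal g x

/-- Disjointness of two functionals: `(|f| ∧ |g|)(x) = 0` for all `x ≥ 0`, where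
`(|f| ∧ |g|)(x) = inf { |f|(y) + |g|(x - y) : 0 ≤ y ≤ x }` (Riesz–Kantorovich). -/
def FunDisjoint (f g : E →L[ℝ] ℝ) : Prop :=
  ∀ x : E, 0 ≤ x →
    sInf ((fun y => absVal f y + absVal g (x - y)) '' {y | 0 ≤ y ∧ y ≤ x}) = 0

/-- A sequence of functionals is weak*-null. -/
def WeakStarNull (f : ℕ → E →L[ℝ] ℝ) : Prop :=
  ∀ x : E, Tendsto (fun n => f n x) atTop (𝓝 0)

/-- A sequence in `E` is weakly null. -/
def WeaklyNull (x : ℕ → E) : Prop :=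
  ∀ f : E →L[ℝ] ℝ, Tendsto (fun n => f (x n)) atTop (𝓝 0)

/-- A sequence of functionals is weakly null (i.e. null for `σ(E*, E**)`). -/
def WeaklyNullDual (f : ℕ → E →L[ℝ] ℝ) : Prop :=
  ∀ Φ : (E →L[ℝ] ℝ) →L[ℝ] ℝ, Tendsto (fun n => Φ (f n)) atTop (𝓝 0)

/-- Disjointness of two elements of a Banach lattice. -/
def ElemDisjoint (x y : E) : Prop := |x| ⊓ |y| = 0

/-- A set is almost limited: it is norm bounded and every disjoint weak*-null sequence of
functionals converges uniformly to zero on it. -/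
def AlmostLimited (A : Set E) : Prop :=
  Bornology.IsBounded A ∧
    ∀ f : ℕ → E →L[ℝ] ℝ, Pairwise (fun m n => FunDisjoint (f m) (f n)) → WeakStarNull f →
      ∀ ε > 0, ∀ᶠ n in atTop, ∀ x ∈ A, |f n x| < ε

/-- A set is limited: it is norm bounded and every weak*-null sequence of functionals
converges uniformly to zero on it. -/
def LimitedSet (A : Set E) : Prop :=
  Bornology.IsBounded A ∧
    ∀ f : ℕ → E →L[ℝ] ℝ, WeakStarNull f →
      ∀ ε > 0, ∀ᶠ n in atTop, ∀ x ∈ A, |f n x| < ε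

/-- A set is almost Dunford–Pettis: it is norm bounded and every disjoint weakly null
sequence of functionals converges uniformly to zero on it. -/
def AlmostDPSet (A : Set E) : Prop :=
  Bornology.IsBounded A ∧
    ∀ f : ℕ → E →L[ℝ] ℝ, Pairwise (fun m n => FunDisjoint (f m) (f n)) → WeaklyNullDual f →
      ∀ ε > 0, ∀ᶠ n in atTop, ∀ x ∈ A, |f n x| < ε

/-- The solid hull of a set. -/
def SolidHull (A : Set E) : Set E := {y | ∃ x ∈ A, |y| ≤ |x|}

/-- A set is L-weakly compact: norm bounded, and every disjoint sequence in its solid hull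
is norm null. -/
def LWeaklyCompact (A : Set E) : Prop :=
  Bornology.IsBounded A ∧
    ∀ x : ℕ → E, (∀ n, x n ∈ SolidHull A) → Pairwise (fun m n => ElemDisjoint (x m) (x n)) →
      Tendsto (fun n => ‖x n‖) atTop (𝓝 0)

/-- A set `B ⊆ E*` is an almost L-set: norm bounded, and every disjoint weakly null sequence
of `E` converges uniformly to zero on `B`. -/
def AlmostLSet (B : Set (E →L[ℝ] ℝ)) : Prop :=
  Bornology.IsBounded B ∧
    ∀ x : ℕ → E, Pairwise (fun m n => ElemDisjoint (x m) (x n)) → WeaklyNull x →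
      ∀ ε > 0, ∀ᶠ n in atTop, ∀ f ∈ B, |f (x n)| < ε

/-- The solid hull of a set of functionals, using the dual order. -/
def DualSolidHull (B : Set (E →L[ℝ] ℝ)) : Set (E →L[ℝ] ℝ) :=
  {g | ∃ f ∈ B, FunAbsLe g f}

/-- A set `B ⊆ E*` is L-weakly compact: norm bounded, and every disjoint sequence in its
solid hull is norm null. -/
def DualLWeaklyCompact (B : Set (E →L[ℝ] ℝ)) : Prop :=
  Bornology.IsBounded B ∧
    ∀ g : ℕ → E →L[ℝ] ℝ, (∀ n, g n ∈ DualSolidHull B) →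
      Pairwise (fun m n => FunDisjoint (g m) (g n)) →
        Tendsto (fun n => ‖g n‖) atTop (𝓝 0)

end Defs

/-- A Banach lattice is σ-Dedekind complete: every (countable) sequence bounded above has a
supremum. -/
def SigmaDedekindComplete (E : Type*) [NormedAddCommGroup E] [Lattice E] [HasSolidNorm E] [IsOrderedAddMonoid E] : Prop :=
  ∀ s : ℕ → E, (∃ b, ∀ n, s n ≤ b) → ∃ a, IsLUB (Set.range s) a

/-- The norm of `E` is order continuous: if a downward directed set has infimum `0`, then it
contains elements of arbitrarily small norm. -/
def OrderContinuousNorm (E : Type*) [NormedAddCommGroup E] [Lattice E] [HasSolidNorm E] [IsOrderedAddMonoid E] : Prop :=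
  ∀ A : Set E, A.Nonempty → DirectedOn (· ≥ ·) A → IsGLB A 0 →
    ∀ ε > 0, ∃ a ∈ A, ‖a‖ < ε

/-- The norm of `E*` is order continuous (with the dual order spelled out): if a nonempty
family of functionals is downward directed, consists of positive functionals, and `0` is its
greatest lower bound, then it contains functionals of arbitrarily small norm. -/
def DualOrderContinuousNorm (E : Type*) [NormedAddCommGroup E] [Lattice E] [HasSolidNorm E] [IsOrderedAddMonoid E] [NormedSpace ℝ E] :
    Prop :=
  ∀ A : Set (E →L[ℝ] ℝ), A.Nonempty →
    (∀ f ∈ A, ∀ g ∈ A, ∃ h ∈ A, FunLe h f ∧ FunLe h g) →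
    (∀ f ∈ A, FunLe 0 f) →
    (∀ g, (∀ f ∈ A, FunLe g f) → FunLe g 0) →
    ∀ ε > 0, ∃ f ∈ A, ‖f‖ < ε

/-- `E` has the weak Dunford–Pettis* property: `f n (x n) → 0` for every weakly null
sequence `(x n)` in `E` and every disjoint weak*-null sequence `(f n)` in `E*`. -/
def WDPStar (E : Type*) [NormedAddCommGroup E] [Lattice E] [HasSolidNorm E] [IsOrderedAddMonoid E] [NormedSpace ℝ E] : Prop :=
  ∀ (x : ℕ → E) (f : ℕ → E →L[ℝ] ℝ), WeaklyNull x →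
    Pairwise (fun m n => FunDisjoint (f m) (f n)) → WeakStarNull f →
      Tendsto (fun n => f n (x n)) atTop (𝓝 0)

/-- `E` has the positive Schur property: every weakly null sequence of positive elements is
norm null. -/
def PositiveSchur (E : Type*) [NormedAddCommGroup E] [Lattice E] [HasSolidNorm E] [IsOrderedAddMonoid E] [NormedSpace ℝ E] : Prop :=
  ∀ x : ℕ → E, (∀ n, 0 ≤ x n) → WeaklyNull x → Tendsto (fun n => ‖x n‖) atTop (𝓝 0)

/-- A set is relatively weakly compact if the weak closure of its image in the weak space is
compact. -/
def RelWeaklyCompact {E : Type*} [NormedAddCommGroup E] [Lattice E] [HasSolidNorm E] [IsOrderedAddMonoid E] [NormedSpace ℝ E]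
    (W : Set E) : Prop :=
  IsCompact (closure ((toWeakSpace ℝ E) '' W))

/-!
Let `(f n)` be disjoint and weak*-null, hence norm bounded by Banach–Steinhaus. If `f n` were
not uniformly small on the solid hull, there would be `x k ∈ A` and a subsequence with
`ε ≤ |f (φ k)|(|x k|)`. Hahn–Banach for the sublinear functional `|f (φ k)|(|·|)` yields
`g k` dominated by it with `g k (x k) = |f (φ k)|(|x k|)`; domination keeps the `g k`
disjoint and bounded. Under order continuity every bounded disjoint sequence in `E*` is
weak*-null, so the almost limited set `A` forces `g k (x k) → 0`, a contradiction.
-/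

section LatticeOrderedGroup

variable {α : Type*} [Lattice α] [AddCommGroup α] [IsOrderedAddMonoid α]

/-- Riesz decomposition: `z₁` is `z` clipped to the interval `[-a, a]`. -/
lemma exists_abs_le_and_abs_sub_le_of_abs_le_add {z a b : α} (ha : 0 ≤ a) (hb : 0 ≤ b)
    (hz : |z| ≤ a + b) : ∃ z₁, |z₁| ≤ a ∧ |z - z₁| ≤ b := by
  have hz_le : z ≤ a + b := (le_abs_self z).trans hz
  have le_hz : -(a + b) ≤ z := neg_le.1 ((neg_le_abs z).trans hz)
  refine ⟨z ⊓ a ⊔ -a, abs_le'.2 ⟨sup_le inf_le_right (neg_le_self ha), neg_le.1 le_sup_right⟩, ?_⟩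
  have hrw : z - (z ⊓ a ⊔ -a) = ((z - a) ⊔ 0) ⊓ (z + a) := by
    rw [sub_eq_add_neg, neg_sup, neg_neg, neg_inf, add_inf, add_sup, add_neg_cancel, sup_comm,
      ← sub_eq_add_neg]
  rw [hrw, abs_le']
  constructor
  · exact inf_le_left.trans (sup_le (sub_le_iff_le_add'.2 hz_le) hb)
  · refine neg_le.1 (le_inf (le_sup_of_le_right (neg_nonpos_of_nonneg hb)) ?_)
    calc -b = -(a + b) + a := by abel
      _ ≤ z + a := by gcongr

end LatticeOrderedGroup

section NormedLattice

variable {E : Type*} [NormedAddCommGroup E] [Lattice E] [HasSolidNorm E] [IsOrderedAddMonoid E]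
  [NormedSpace ℝ E]

/-- Dyadic multiples of a positive vector are positive (halving is allowed since `0 ≤ 2 • u`
forces `0 ≤ u`), and the positive cone is closed. -/
instance HasSolidNorm.toPosSMulMono : PosSMulMono ℝ E := by
  refine .of_smul_nonneg fun c hc v hv => ?_
  have dyadic : ∀ k m : ℕ, 0 ≤ ((m : ℝ) / 2 ^ k) • v := by
    intro k
    induction k with
    | zero => intro m; simpa [Nat.cast_smul_eq_nsmul] using nsmul_nonneg hv m
    | succ k ih =>
      intro m
      refine nsmul_two_semiclosed ?_
      rw [two_nsmul, ← add_smul]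
      convert ih m using 2
      rw [pow_succ]
      ring
  have approx : Tendsto (fun k : ℕ => ((⌊c * 2 ^ k⌋₊ : ℝ) / 2 ^ k) • v) atTop (𝓝 (c • v)) :=
    ((tendsto_nat_floor_mul_div_atTop hc).comp
      (tendsto_pow_atTop_atTop_of_one_lt one_lt_two)).smul_const v
  exact ge_of_tendsto approx (Eventually.of_forall fun k => dyadic k _)

lemma abs_smul_of_nonneg {c : ℝ} (hc : 0 ≤ c) (w : E) : |c • w| = c • |w| := by
  rcases hc.eq_or_lt with rfl | hc
  · simp
  · change c • w ⊔ -(c • w) = c • (w ⊔ -w)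
    rw [← smul_neg]
    exact ((OrderIso.smulRight hc).map_sup w (-w)).symm

lemma eq_zero_of_forall_nsmul_le {a b : E} (ha : 0 ≤ a) (h : ∀ n : ℕ, n • a ≤ b) : a = 0 := by
  by_contra hne
  have bound : ∀ n : ℕ, n * ‖a‖ ≤ ‖b‖ := fun n => by
    rw [← nsmul_eq_mul, ← RCLike.norm_nsmul ℝ]
    exact norm_le_norm_of_abs_le_abs
      ((abs_of_nonneg (nsmul_nonneg ha n)).trans_le ((h n).trans (le_abs_self b)))
  obtain ⟨n, hn⟩ := exists_nat_gt (‖b‖ / ‖a‖)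
  rw [div_lt_iff₀ (norm_pos_iff.2 hne)] at hn
  linarith [bound n]

end NormedLattice

section AbsVal

variable {E : Type*} [NormedAddCommGroup E] [Lattice E] [NormedSpace ℝ E] (f : E →L[ℝ] ℝ) {u v : E}

lemma apply_le_norm_mul_of_abs_le [HasSolidNorm E] {z : E} (hz : |z| ≤ u) : f z ≤ ‖f‖ * ‖u‖ :=
  calc f z ≤ ‖f z‖ := le_abs_self _
    _ ≤ ‖f‖ * ‖z‖ := f.le_opNorm z
    _ ≤ ‖f‖ * ‖u‖ := by
      gcongr
      exact norm_le_norm_of_abs_le_abs (hz.trans (le_abs_self u))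

lemma le_absVal [HasSolidNorm E] {z : E} (hz : |z| ≤ u) : f z ≤ absVal f u :=
  le_csSup ⟨‖f‖ * ‖u‖, by rintro _ ⟨y, hy, rfl⟩; exact apply_le_norm_mul_of_abs_le f hy⟩
    ⟨z, hz, rfl⟩

lemma abs_apply_le_absVal [HasSolidNorm E] (z : E) : |f z| ≤ absVal f |z| :=
  abs_le'.2 ⟨le_absVal f le_rfl, by simpa using le_absVal f (z := -z) (abs_neg z).le⟩

lemma absVal_le [IsOrderedAddMonoid E] {c : ℝ} (hu : 0 ≤ u) (h : ∀ z, |z| ≤ u → f z ≤ c) :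
    absVal f u ≤ c :=
  csSup_le ⟨f 0, 0, by simpa using hu, rfl⟩ (by rintro _ ⟨z, hz, rfl⟩; exact h z hz)

variable [HasSolidNorm E] [IsOrderedAddMonoid E]

lemma absVal_nonneg (hu : 0 ≤ u) : 0 ≤ absVal f u := by
  simpa using le_absVal f (z := 0) (by simpa using hu)

lemma absVal_le_norm_mul (hu : 0 ≤ u) : absVal f u ≤ ‖f‖ * ‖u‖ :=
  absVal_le f hu fun _ => apply_le_norm_mul_of_abs_le f

lemma absVal_zero : absVal f 0 = 0 :=
  le_antisymm (by simpa using absVal_le_norm_mul f le_rfl) (absVal_nonneg f le_rfl)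

lemma absVal_abs_le_norm_mul (w : E) : absVal f |w| ≤ ‖f‖ * ‖w‖ := by
  simpa [norm_abs_eq_norm] using absVal_le_norm_mul f (abs_nonneg w)

lemma absVal_mono (hu : 0 ≤ u) (huv : u ≤ v) : absVal f u ≤ absVal f v :=
  absVal_le f hu fun _ hz => le_absVal f (hz.trans huv)

lemma absVal_add_le (hu : 0 ≤ u) (hv : 0 ≤ v) : absVal f (u + v) ≤ absVal f u + absVal f v :=
  absVal_le f (add_nonneg hu hv) fun z hz => by
    obtain ⟨z₁, hz₁, hz₂⟩ := exists_abs_le_and_abs_sub_le_of_abs_le_add hu hv hz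
    calc f z = f z₁ + f (z - z₁) := by rw [← map_add, add_sub_cancel]
      _ ≤ absVal f u + absVal f v := add_le_add (le_absVal f hz₁) (le_absVal f hz₂)

lemma absVal_smul {c : ℝ} (hc : 0 < c) (hu : 0 ≤ u) : absVal f (c • u) = c * absVal f u := by
  have smul_le : ∀ d : ℝ, 0 < d → ∀ w : E, 0 ≤ w → absVal f (d • w) ≤ d * absVal f w := by
    intro d hd w hw
    refine absVal_le f (smul_nonneg hd.le hw) fun z hz => ?_
    have hz' : |d⁻¹ • z| ≤ w := by
      rw [abs_smul_of_nonneg (inv_nonneg.2 hd.le), inv_smul_le_iff_of_pos hd]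
      exact hz
    calc f z = d * f (d⁻¹ • z) := by rw [map_smul, smul_eq_mul, mul_inv_cancel_left₀ hd.ne']
      _ ≤ d * absVal f w := by gcongr; exact le_absVal f hz'
  refine le_antisymm (smul_le c hc u hu) ?_
  have := smul_le c⁻¹ (inv_pos.2 hc) (c • u) (smul_nonneg hc.le hu)
  rwa [inv_smul_smul₀ hc.ne', le_inv_mul_iff₀ hc] at this

lemma absVal_le_norm_mul_sup_sub_add (hu : 0 ≤ u) (hv : 0 ≤ v) :
    absVal f u ≤ ‖f‖ * ‖u ⊔ v - v‖ + absVal f v :=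
  calc absVal f u ≤ absVal f (u ⊔ v - v + v) := absVal_mono f hu (by simp)
    _ ≤ absVal f (u ⊔ v - v) + absVal f v :=
      absVal_add_le f (sub_nonneg.2 le_sup_right) hv
    _ ≤ ‖f‖ * ‖u ⊔ v - v‖ + absVal f v := by
      gcongr; exact absVal_le_norm_mul f (sub_nonneg.2 le_sup_right)

lemma absVal_le_norm_mul_sub_add (hu : 0 ≤ u) (hv : 0 ≤ v) :
    absVal f u ≤ ‖f‖ * ‖u - v‖ + absVal f v :=
  (absVal_le_norm_mul_sup_sub_add f hu hv).trans <| by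
    gcongr
    simpa using norm_sup_sub_sup_le_norm u v v

lemma absVal_le_of_tendsto {t : ℕ → E} {T : E} {C : ℝ} (ht : Tendsto t atTop (𝓝 T))
    (ht0 : ∀ n, 0 ≤ t n) (hT : 0 ≤ T) (hC : ∀ n, absVal f (t n) ≤ C) : absVal f T ≤ C := by
  have hlim : Tendsto (fun n => C + ‖f‖ * ‖T - t n‖) atTop (𝓝 (C + ‖f‖ * 0)) := by
    refine tendsto_const_nhds.add (tendsto_const_nhds.mul ?_)
    simpa [norm_sub_rev] using tendsto_iff_norm_sub_tendsto_zero.1 ht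
  rw [mul_zero, add_zero] at hlim
  exact ge_of_tendsto' hlim fun n => (absVal_le_norm_mul_sub_add f hT (ht0 n)).trans
    (by linarith [hC n])

lemma absVal_partialSups_le_sum {w : ℕ → E} (hw : ∀ i, 0 ≤ w i) (n : ℕ) :
    absVal f (partialSups w n) ≤ ∑ i ∈ Finset.range (n + 1), absVal f (w i) := by
  induction n with
  | zero => simp
  | succ n ih =>
    have hsup : 0 ≤ partialSups w n := (hw 0).trans (le_partialSups_of_le w (Nat.zero_le n))
    rw [partialSups_add_one, Finset.sum_range_succ]
    calc absVal f (partialSups w n ⊔ w (n + 1))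
        ≤ absVal f (partialSups w n + w (n + 1)) :=
          absVal_mono f (hsup.trans le_sup_left)
            (sup_le (le_add_of_nonneg_right (hw _)) (le_add_of_nonneg_left hsup))
      _ ≤ absVal f (partialSups w n) + absVal f (w (n + 1)) := absVal_add_le f hsup (hw _)
      _ ≤ _ := by gcongr

end AbsVal

section Dual

variable {E : Type*} [NormedAddCommGroup E] [Lattice E] [HasSolidNorm E] [IsOrderedAddMonoid E]
  [NormedSpace ℝ E]

/-- Hahn–Banach for the sublinear functional `w ↦ |f|(|w|)`, starting from `span {x}`. -/
lemma exists_apply_eq_absVal_abs_and_le (f : E →L[ℝ] ℝ) (x : E) :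
    ∃ g : E →L[ℝ] ℝ, g x = absVal f |x| ∧ (∀ w, g w ≤ absVal f |w|) ∧ ‖g‖ ≤ ‖f‖ := by
  rcases eq_or_ne x 0 with rfl | hx
  · exact ⟨0, by simp [absVal_zero], fun w => by simpa using absVal_nonneg f (abs_nonneg w),
      by simp⟩
  set p : E → ℝ := fun w => absVal f |w|
  have p_nonneg : ∀ w, 0 ≤ p w := fun w => absVal_nonneg f (abs_nonneg w)
  have p_smul : ∀ c : ℝ, 0 < c → ∀ w, p (c • w) = c * p w := fun c hc w => by
    simp only [p, abs_smul_of_nonneg hc.le, absVal_smul f hc (abs_nonneg w)]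
  have p_add : ∀ w₁ w₂, p (w₁ + w₂) ≤ p w₁ + p w₂ := fun w₁ w₂ =>
    (absVal_mono f (abs_nonneg _) (abs_add_le w₁ w₂)).trans
      (absVal_add_le f (abs_nonneg _) (abs_nonneg _))
  set g₀ := LinearPMap.mkSpanSingleton (K := ℝ) (σ := RingHom.id ℝ) x (p x) hx
  have g₀_le : ∀ w : g₀.domain, g₀ w ≤ p w := by
    rintro ⟨w, hw⟩
    obtain ⟨c, rfl⟩ := Submodule.mem_span_singleton.1 hw
    rw [LinearPMap.mkSpanSingleton'_apply x (p x) _ c hw]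
    rcases le_or_gt c 0 with hc | hc
    · exact (mul_nonpos_of_nonpos_of_nonneg hc (p_nonneg x)).trans (p_nonneg _)
    · exact (p_smul c hc x).ge
  obtain ⟨g, hg_ext, hg_le⟩ := exists_extension_of_le_sublinear g₀ p p_smul p_add g₀_le
  have hg_bound : ∀ w, ‖g w‖ ≤ ‖f‖ * ‖w‖ := fun w => by
    refine abs_le.2 ⟨?_, (hg_le w).trans (absVal_abs_le_norm_mul f w)⟩
    have := (hg_le (-w)).trans (absVal_abs_le_norm_mul f (-w))
    rw [map_neg, norm_neg] at this
    linarith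
  refine ⟨g.mkContinuous ‖f‖ hg_bound, ?_, hg_le,
    LinearMap.mkContinuous_norm_le g (norm_nonneg f) hg_bound⟩
  change g x = p x
  rw [hg_ext ⟨x, Submodule.mem_span_singleton_self x⟩]
  exact LinearPMap.mkSpanSingleton_apply ℝ ℝ hx (p x)

lemma absVal_le_of_le_absVal_abs {g f : E →L[ℝ] ℝ} (hgf : ∀ w, g w ≤ absVal f |w|) {u : E}
    (hu : 0 ≤ u) : absVal g u ≤ absVal f u :=
  absVal_le g hu fun z hz => (hgf z).trans (absVal_mono f (abs_nonneg z) hz)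

lemma funDisjoint_iff {f g : E →L[ℝ] ℝ} : FunDisjoint f g ↔
    ∀ x : E, 0 ≤ x → ∀ δ > 0, ∃ y, 0 ≤ y ∧ y ≤ x ∧ absVal f y + absVal g (x - y) < δ := by
  refine forall₂_congr fun x hx => ?_
  set S := (fun y => absVal f y + absVal g (x - y)) '' {y | 0 ≤ y ∧ y ≤ x}
  have hS : ∀ s ∈ S, 0 ≤ s := by
    rintro _ ⟨y, hy, rfl⟩
    exact add_nonneg (absVal_nonneg f hy.1) (absVal_nonneg g (sub_nonneg.2 hy.2))
  constructor
  · intro h0 δ hδ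
    obtain ⟨_, ⟨y, hy, rfl⟩, hyδ⟩ := Real.lt_sInf_add_pos (s := S) ⟨_, 0, ⟨le_rfl, hx⟩, rfl⟩ hδ
    exact ⟨y, hy.1, hy.2, by simpa [h0] using hyδ⟩
  · intro hsmall
    refine le_antisymm (le_of_forall_pos_lt_add fun δ hδ => ?_) (Real.sInf_nonneg hS)
    obtain ⟨y, hy0, hyx, hyδ⟩ := hsmall δ hδ
    exact csInf_lt_of_lt ⟨0, hS⟩ ⟨y, ⟨hy0, hyx⟩, rfl⟩ (by simpa using hyδ)

lemma FunDisjoint.mono {f g f' g' : E →L[ℝ] ℝ} (h : FunDisjoint f g)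
    (hf : ∀ u, 0 ≤ u → absVal f' u ≤ absVal f u) (hg : ∀ u, 0 ≤ u → absVal g' u ≤ absVal g u) :
    FunDisjoint f' g' := by
  rw [funDisjoint_iff] at h ⊢
  intro x hx δ hδ
  obtain ⟨y, hy0, hyx, hyδ⟩ := h x hx δ hδ
  exact ⟨y, hy0, hyx, lt_of_le_of_lt
    (add_le_add (hf y hy0) (hg (x - y) (sub_nonneg.2 hyx))) hyδ⟩

end Dual

lemma sum_range_half_pow_add_le_two (a n : ℕ) : ∑ i ∈ Finset.range n, (1 / 2 : ℝ) ^ (i + a) ≤ 2 :=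
  (Finset.sum_le_sum fun i _ => pow_le_pow_of_le_one (by norm_num) (by norm_num)
    (Nat.le_add_right i a)).trans (sum_geometric_two_le n)

section OrderContinuous

variable {E : Type*} [NormedAddCommGroup E] [Lattice E] [HasSolidNorm E] [IsOrderedAddMonoid E]
  [NormedSpace ℝ E]

/-- If `b` is below all these gaps, then `y - b⁺` is an upper bound whenever `y` is; iterating
gives `k • b⁺ ≤ x - s 0` for all `k`, so `b⁺ = 0`. -/
lemma isGLB_image2_sub_upperBounds_range {s : ℕ → E} (hs : BddAbove (Set.range s)) :
    IsGLB (Set.image2 (· - ·) (upperBounds (Set.range s)) (Set.range s)) 0 := by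
  refine ⟨?_, fun b hb => ?_⟩
  · rintro _ ⟨y, hy, _, hz, rfl⟩
    exact sub_nonneg.2 (hy hz)
  obtain ⟨x, hx⟩ := hs
  have step : ∀ y ∈ upperBounds (Set.range s), y - b⁺ ∈ upperBounds (Set.range s) := by
    rintro y hy _ ⟨N, rfl⟩
    have hbN : s N + b ≤ y := le_sub_iff_add_le'.1 (hb ⟨y, hy, s N, ⟨N, rfl⟩, rfl⟩)
    rw [le_sub_iff_add_le, posPart_def, add_sup, add_zero]
    exact sup_le hbN (hy ⟨N, rfl⟩)
  have iterate : ∀ k : ℕ, x - k • b⁺ ∈ upperBounds (Set.range s) := by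
    intro k
    induction k with
    | zero => simpa using hx
    | succ k ih => simpa [succ_nsmul, sub_add_eq_sub_sub] using step _ ih
  exact posPart_eq_zero.1 (eq_zero_of_forall_nsmul_le (posPart_nonneg b) (b := x - s 0)
    fun k => le_sub_comm.1 (iterate k ⟨0, rfl⟩))

lemma OrderContinuousNorm.cauchySeq_of_monotone (hoc : OrderContinuousNorm E) {s : ℕ → E}
    (hs : Monotone s) (hbdd : BddAbove (Set.range s)) : CauchySeq s := by
  set C := Set.image2 (· - ·) (upperBounds (Set.range s)) (Set.range s)
  obtain ⟨x, hx⟩ := hbdd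
  have hC : C.Nonempty := ⟨x - s 0, Set.mem_image2_of_mem hx ⟨0, rfl⟩⟩
  have hdir : DirectedOn (· ≥ ·) C := by
    rintro _ ⟨y₁, hy₁, _, ⟨N₁, rfl⟩, rfl⟩ _ ⟨y₂, hy₂, _, ⟨N₂, rfl⟩, rfl⟩
    refine ⟨y₁ ⊓ y₂ - s (max N₁ N₂), Set.mem_image2_of_mem
      (fun _ hz => le_inf (hy₁ hz) (hy₂ hz)) ⟨_, rfl⟩, ?_, ?_⟩
    · exact sub_le_sub inf_le_left (hs (le_max_left _ _))
    · exact sub_le_sub inf_le_right (hs (le_max_right _ _))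
  refine Metric.cauchySeq_iff'.2 fun ε hε => ?_
  obtain ⟨_, ⟨y, hy, _, ⟨N, rfl⟩, rfl⟩, hyN⟩ :=
    hoc C hC hdir (isGLB_image2_sub_upperBounds_range ⟨x, hx⟩) ε hε
  refine ⟨N, fun n hn => (dist_eq_norm _ _).trans_lt ((norm_le_norm_of_abs_le_abs ?_).trans_lt hyN)⟩
  rw [abs_of_nonneg (sub_nonneg.2 (hs hn)), abs_of_nonneg (sub_nonneg.2 (hy ⟨N, rfl⟩))]
  exact sub_le_sub_right (hy ⟨n, rfl⟩) _

/-- `x - z` is the limit of the partial suprema of the `x - y i`. -/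
lemma OrderContinuousNorm.exists_le_forall_absVal_sub_le [CompleteSpace E]
    (hoc : OrderContinuousNorm E) (f : E →L[ℝ] ℝ) {x : E} {y : ℕ → E} (hy0 : ∀ i, 0 ≤ y i)
    (hyx : ∀ i, y i ≤ x) {C : ℝ} (hC : ∀ n, ∑ i ∈ Finset.range n, absVal f (x - y i) ≤ C) :
    ∃ z, 0 ≤ z ∧ (∀ i, z ≤ y i) ∧ absVal f (x - z) ≤ C := by
  set t := partialSups fun i => x - y i
  have ht_le : ∀ n, t n ≤ x := fun n => partialSups_le _ n x fun i _ => sub_le_self x (hy0 i)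
  have ht0 : ∀ n, 0 ≤ t n := fun n =>
    (sub_nonneg.2 (hyx 0)).trans (le_partialSups_of_le (fun i => x - y i) (Nat.zero_le n))
  obtain ⟨T, hT⟩ := cauchySeq_tendsto_of_complete
    (hoc.cauchySeq_of_monotone t.monotone ⟨x, Set.forall_mem_range.2 ht_le⟩)
  refine ⟨x - T, sub_nonneg.2 (le_of_tendsto' hT ht_le), fun i => ?_, ?_⟩
  · rw [sub_le_comm]
    exact (le_partialSups_of_le (fun i => x - y i) le_rfl).trans (t.monotone.ge_of_tendsto hT i)
  · rw [sub_sub_cancel]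
    exact absVal_le_of_tendsto f hT ht0 (ge_of_tendsto' hT ht0) fun n =>
      (absVal_partialSups_le_sum f (fun i => sub_nonneg.2 (hyx i)) n).trans (hC _)

end OrderContinuous

lemma WeakStarNull.exists_norm_le {E : Type*} [NormedAddCommGroup E] [NormedSpace ℝ E]
    [CompleteSpace E] {G : ℕ → E →L[ℝ] ℝ} (hG : WeakStarNull G) :
    ∃ K, ∀ n, ‖G n‖ ≤ K :=
  banach_steinhaus fun w => by
    obtain ⟨C, hC⟩ := (hG w).norm.bddAbove_range
    exact ⟨C, fun n => hC ⟨n, rfl⟩⟩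

section DisjointSequences

variable {E : Type*} [NormedAddCommGroup E] [Lattice E] [HasSolidNorm E] [IsOrderedAddMonoid E]
  [NormedSpace ℝ E] [CompleteSpace E]

/-- For `k < l`, disjointness splits `x = y + (x - y)` with `|G l|(y)` and `|G k|(x - y)` tiny;
`W k` is taken below all the `y` chosen for `k`. -/
lemma OrderContinuousNorm.exists_seq_absVal_sub_le_of_pairwise_funDisjoint
    (hoc : OrderContinuousNorm E) {G : ℕ → E →L[ℝ] ℝ}
    (hG : Pairwise fun m n => FunDisjoint (G m) (G n)) {x : E} (hx : 0 ≤ x) {η : ℝ}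
    (hη : 0 < η) :
    ∃ W : ℕ → E, (∀ k, 0 ≤ W k ∧ W k ≤ x) ∧ (∀ k, absVal (G k) (x - W k) ≤ 2 * η) ∧
      ∀ m l, m < l → absVal (G l) (W m) ≤ η * (1 / 2) ^ (m + l) := by
  set δ : ℕ → ℕ → ℝ := fun k l => η * (1 / 2) ^ (k + l)
  have split : ∀ k l, k < l → ∃ y, 0 ≤ y ∧ y ≤ x ∧
      absVal (G l) y < δ k l ∧ absVal (G k) (x - y) < δ k l := by
    intro k l hkl
    obtain ⟨y, hy0, hyx, hy⟩ := funDisjoint_iff.1 (hG hkl.ne') x hx (δ k l) (by positivity)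
    exact ⟨y, hy0, hyx, by linarith [absVal_nonneg (G k) (sub_nonneg.2 hyx)],
      by linarith [absVal_nonneg (G l) hy0]⟩
  choose! Y hY0 hYx hYl hYk using split
  have hW : ∀ k, ∃ z, 0 ≤ z ∧ (∀ i, z ≤ Y k (k + 1 + i)) ∧ absVal (G k) (x - z) ≤ 2 * η :=
    fun k => hoc.exists_le_forall_absVal_sub_le (G k) (fun i => hY0 _ _ (by omega))
      (fun i => hYx _ _ (by omega)) fun n =>
      calc ∑ i ∈ Finset.range n, absVal (G k) (x - Y k (k + 1 + i))
          ≤ ∑ i ∈ Finset.range n, η * (1 / 2) ^ (i + (2 * k + 1)) :=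
            Finset.sum_le_sum fun i _ => (hYk _ _ (by omega)).le.trans_eq (by simp only [δ]; ring)
        _ ≤ 2 * η := by
            rw [← Finset.mul_sum]
            nlinarith [sum_range_half_pow_add_le_two (2 * k + 1) n]
  choose W hW0 hWY hWx using hW
  refine ⟨W, fun k => ⟨hW0 k, (hWY k 0).trans (hYx _ _ (by omega))⟩, hWx, fun m l hml => ?_⟩
  obtain ⟨i, rfl⟩ : ∃ i, l = m + 1 + i := ⟨l - (m + 1), by omega⟩
  exact (absVal_mono _ (hW0 m) (hWY m i)).trans (hYl _ _ hml).le

/-- Otherwise the pieces `W k` carry most of `|G k|(x)` but are almost disjoint for the later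
`G l`. Order continuity makes their partial suprema `t N` converge, so the increment
`W (N + 1) ⊔ t N - t N` is small in norm, yet it carries most of `|G (N + 1)|(x)`. -/
lemma OrderContinuousNorm.exists_absVal_lt (hoc : OrderContinuousNorm E)
    {G : ℕ → E →L[ℝ] ℝ} {K : ℝ} (hK : ∀ n, ‖G n‖ ≤ K)
    (hG : Pairwise fun m n => FunDisjoint (G m) (G n)) {x : E} (hx : 0 ≤ x) {ε : ℝ}
    (hε : 0 < ε) : ∃ n, absVal (G n) x < ε := by
  by_contra! hlarge
  obtain ⟨W, hW, hWx, hGW⟩ :=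
    hoc.exists_seq_absVal_sub_le_of_pairwise_funDisjoint hG hx (η := ε / 8) (by positivity)
  set t := partialSups W
  have ht0 : ∀ n, 0 ≤ t n := fun n => (hW 0).1.trans (le_partialSups_of_le W (Nat.zero_le n))
  have ht_le : ∀ n, t n ≤ x := fun n => partialSups_le W n x fun i _ => (hW i).2
  have hK0 : 0 ≤ K := (norm_nonneg _).trans (hK 0)
  obtain ⟨N, hN⟩ := Metric.cauchySeq_iff'.1
    (hoc.cauchySeq_of_monotone t.monotone ⟨x, Set.forall_mem_range.2 ht_le⟩)
    (ε / (4 * (K + 1))) (by positivity)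
  have increment : ‖G (N + 1)‖ * ‖W (N + 1) ⊔ t N - t N‖ ≤ ε / 4 := by
    have hgap := hN (N + 1) N.le_succ
    rw [dist_eq_norm, partialSups_add_one, sup_comm] at hgap
    calc ‖G (N + 1)‖ * ‖W (N + 1) ⊔ t N - t N‖ ≤ K * (ε / (4 * (K + 1))) :=
          mul_le_mul (hK _) hgap.le (norm_nonneg _) hK0
      _ ≤ ε / 4 := by
          rw [mul_div_assoc', div_le_div_iff₀ (by positivity) (by norm_num)]
          nlinarith
  have overlap : absVal (G (N + 1)) (t N) ≤ ε / 4 :=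
    calc absVal (G (N + 1)) (t N) ≤ ∑ m ∈ Finset.range (N + 1), absVal (G (N + 1)) (W m) :=
          absVal_partialSups_le_sum _ (fun m => (hW m).1) N
      _ ≤ ∑ m ∈ Finset.range (N + 1), ε / 8 * (1 / 2) ^ (m + (N + 1)) :=
          Finset.sum_le_sum fun m hm => hGW m (N + 1) (Finset.mem_range.1 hm)
      _ ≤ ε / 4 := by
          rw [← Finset.mul_sum]
          nlinarith [sum_range_half_pow_add_le_two (N + 1) (N + 1)]
  have upper := absVal_le_norm_mul_sup_sub_add (G (N + 1)) (hW (N + 1)).1 (ht0 N)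
  have lower := absVal_add_le (G (N + 1)) (hW (N + 1)).1 (sub_nonneg.2 (hW (N + 1)).2)
  rw [add_sub_cancel] at lower
  linarith [hlarge (N + 1), hWx (N + 1)]

lemma OrderContinuousNorm.tendsto_absVal_of_pairwise_funDisjoint (hoc : OrderContinuousNorm E)
    {G : ℕ → E →L[ℝ] ℝ} {K : ℝ} (hK : ∀ n, ‖G n‖ ≤ K)
    (hG : Pairwise fun m n => FunDisjoint (G m) (G n)) {x : E} (hx : 0 ≤ x) :
    Tendsto (fun n => absVal (G n) x) atTop (𝓝 0) := by
  refine tendsto_order.2 ⟨fun a ha => Eventually.of_forall fun n =>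
    ha.trans_le (absVal_nonneg _ hx), fun ε hε => ?_⟩
  by_contra hfar
  obtain ⟨φ, hφ, hφε⟩ := extraction_of_frequently_atTop (not_eventually.1 hfar)
  obtain ⟨n, hn⟩ := hoc.exists_absVal_lt (fun n => hK (φ n))
    (fun m n hmn => hG (hφ.injective.ne hmn)) hx hε
  exact hφε n hn

lemma OrderContinuousNorm.weakStarNull_of_pairwise_funDisjoint (hoc : OrderContinuousNorm E)
    {G : ℕ → E →L[ℝ] ℝ} {K : ℝ} (hK : ∀ n, ‖G n‖ ≤ K)
    (hG : Pairwise fun m n => FunDisjoint (G m) (G n)) : WeakStarNull G := fun w =>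
  squeeze_zero_norm (fun n => abs_apply_le_absVal (G n) w)
    (hoc.tendsto_absVal_of_pairwise_funDisjoint hK hG (abs_nonneg w))

end DisjointSequences

lemma Bornology.IsBounded.solidHull {E : Type*} [NormedAddCommGroup E] [Lattice E]
    [HasSolidNorm E] [IsOrderedAddMonoid E] [NormedSpace ℝ E] {A : Set E}
    (hA : Bornology.IsBounded A) : Bornology.IsBounded (SolidHull A) := by
  obtain ⟨C, hC⟩ := isBounded_iff_forall_norm_le.1 hA
  exact isBounded_iff_forall_norm_le.2
    ⟨C, fun _ ⟨x, hxA, hyx⟩ => (norm_le_norm_of_abs_le_abs hyx).trans (hC x hxA)⟩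

/-- If a Banach lattice has order continuous norm, then the solid hull of every
almost limited set is almost limited. -/
theorem stmt19 {E : Type*} [NormedAddCommGroup E] [Lattice E] [HasSolidNorm E] [IsOrderedAddMonoid E] [NormedSpace ℝ E] [CompleteSpace E]
    (h : OrderContinuousNorm E) (A : Set E) (hA : AlmostLimited A) :
    AlmostLimited (SolidHull A) := by
  refine ⟨hA.1.solidHull, fun f hf hnull ε hε => ?_⟩
  by_contra hfar
  obtain ⟨φ, hφ, hφε⟩ := extraction_of_frequently_atTop (not_eventually.1 hfar)
  have hx : ∀ k, ∃ x ∈ A, ε ≤ absVal (f (φ k)) |x| := fun k => by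
    obtain ⟨y, ⟨x, hxA, hyx⟩, hy⟩ := not_forall₂.1 (hφε k)
    exact ⟨x, hxA, (not_lt.1 hy).trans
      ((abs_apply_le_absVal _ y).trans (absVal_mono _ (abs_nonneg y) hyx))⟩
  choose x hxA hxε using hx
  obtain ⟨K, hK⟩ := hnull.exists_norm_le
  choose g hgx hg_le hg_norm using fun k => exists_apply_eq_absVal_abs_and_le (f (φ k)) (x k)
  have hg : Pairwise fun m n => FunDisjoint (g m) (g n) := fun m n hmn =>
    (hf (hφ.injective.ne hmn)).mono (fun _ => absVal_le_of_le_absVal_abs (hg_le m))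
      (fun _ => absVal_le_of_le_absVal_abs (hg_le n))
  have hg_null := h.weakStarNull_of_pairwise_funDisjoint (fun k => (hg_norm k).trans (hK _)) hg
  obtain ⟨n, hn⟩ := (hA.2 g hg hg_null ε hε).exists
  have := (le_abs_self _).trans_lt (hn (x n) (hxA n))
  linarith [hgx n, hxε n]
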